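/- (Algebraic content of Proposition on |D|² and the second fundamental form.) Let m ≥ 3, let R = (R_ij) be symmetric with S = R_tt, let f satisfy the adapted-frame condition with w ≠ 0, and suppose the pointwise gradient Einstein-type equation holds with α ≠ 0 and β ≠ 0. Define the second fundamental form components h_ab = −H_ab / w for a, b ∈ {1,…,m−1} and the mean curvature h = (1/(m−1)) Σ_a h_aa. Then Σ_{i,j,k} (D_ijk)² = (β/α)² (2 w⁴ / (m−2)²) Σ_{a,b} (h_ab − h δ_ab)² + (2 w² / ((m−1)(m−2))) Σ_a (R_am)². -/

import Mathlib

open Finset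

/-- Kronecker delta. -/
noncomputable def kdelta {m : ℕ} (i j : Fin m) : ℝ := if i = j then 1 else 0

/-- The 3-tensor `D` built from the Ricci components `R` and the gradient components `f`. -/
noncomputable def Dt (m : ℕ) (R : Fin m → Fin m → ℝ) (f : Fin m → ℝ)
    (i j k : Fin m) : ℝ :=
  (1 / ((m : ℝ) - 2)) * (f k * R i j - f j * R i k)
  + (1 / (((m : ℝ) - 1) * ((m : ℝ) - 2))) *
      ∑ t, f t * (R t k * kdelta i j - R t j * kdelta i k)
  - ((∑ t, R t t) / (((m : ℝ) - 1) * ((m : ℝ) - 2))) *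
      (f k * kdelta i j - f j * kdelta i k)

/-! In the adapted frame `f = Pi.single e w`, with `e` the normal index and `E = univ.erase e`
the tangential ones, `D` is skew in its last two indices and its components are
`D a b e = w/(m-2) • R̊ a b`, where `R̊` is the trace-free part of `R` on `E`,
`D a b c = w/((m-1)(m-2)) • (δ a b R e c - δ a c R e b)`, `D e b e = w/(m-1) • R e b` and
`D e b c = 0`. Lagrange's identity sums the squares of the `D a b c`. On `E` the Einstein-type
equation reads `α R a b = c δ a b + β w h a b`, so `R̊ = (β w/α) • h̊`. -/

theorem Finset.sum_sum_mul_sub_mul_sq {ι : Type*} (s : Finset ι) (u v : ι → ℝ) :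
    ∑ b ∈ s, ∑ c ∈ s, (u b * v c - u c * v b) ^ 2
      = 2 * ((∑ b ∈ s, u b ^ 2) * (∑ b ∈ s, v b ^ 2) - (∑ b ∈ s, u b * v b) ^ 2) := by
  calc ∑ b ∈ s, ∑ c ∈ s, (u b * v c - u c * v b) ^ 2
      = ∑ b ∈ s, ∑ c ∈ s, (u b ^ 2 * v c ^ 2 + v b ^ 2 * u c ^ 2
          - 2 * (u b * v b) * (u c * v c)) := by
        refine sum_congr rfl fun b _ => sum_congr rfl fun c _ => by ring
    _ = _ := by
        simp only [sum_add_distrib, sum_sub_distrib, ← mul_sum, ← sum_mul]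
        ring

theorem Fintype.sum_sum_sq_of_antisymm {ι : Type*} [Fintype ι] [DecidableEq ι]
    (T : ι → ι → ℝ) (hT : ∀ j k, T j k = -T k j) (e : ι) :
    ∑ j, ∑ k, T j k ^ 2
      = 2 * ∑ b ∈ univ.erase e, T b e ^ 2
        + ∑ b ∈ univ.erase e, ∑ c ∈ univ.erase e, T b c ^ 2 := by
  have hTee : T e e = 0 := by linarith [hT e e]
  simp only [← add_sum_erase univ _ (mem_univ e), hTee, sum_add_distrib]
  simp_rw [hT e, neg_sq]
  ring

theorem cast_card_univ_erase {m : ℕ} (e : Fin m) : (#(univ.erase e) : ℝ) = m - 1 := by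
  simp [card_erase_of_mem, Nat.cast_sub (Nat.one_le_iff_ne_zero.mpr e.pos.ne')]

theorem kdelta_self {m : ℕ} (a : Fin m) : kdelta a a = 1 := if_pos rfl

theorem kdelta_of_ne {m : ℕ} {a b : Fin m} (h : a ≠ b) : kdelta a b = 0 := if_neg h

theorem sum_kdelta_mul {m : ℕ} {s : Finset (Fin m)} {a : Fin m} (ha : a ∈ s)
    (x : Fin m → ℝ) :
    ∑ b ∈ s, kdelta a b * x b = x a := by
  simp [kdelta, ha]

theorem sum_single_mul {m : ℕ} (e : Fin m) (w : ℝ) (g : Fin m → ℝ) :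
    ∑ t, (Pi.single e w : Fin m → ℝ) t * g t = w * g e := by
  simp [Pi.single_apply]

theorem Dt_antisymm {m : ℕ} (R : Fin m → Fin m → ℝ) (f : Fin m → ℝ) (i j k : Fin m) :
    Dt m R f i j k = -Dt m R f i k j := by
  have hsum : ∑ t, f t * (R t k * kdelta i j - R t j * kdelta i k)
      = -∑ t, f t * (R t j * kdelta i k - R t k * kdelta i j) := by
    rw [← sum_neg_distrib]
    exact sum_congr rfl fun t _ => by ring
  simp only [Dt, hsum]
  ring

noncomputable def tracelessOn {m : ℕ} (s : Finset (Fin m)) (M : Fin m → Fin m → ℝ)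
    (a b : Fin m) : ℝ :=
  M a b - (∑ c ∈ s, M c c) / #s * kdelta a b

theorem tracelessOn_eq_of_mul_eq {m : ℕ} {s : Finset (Fin m)} (hs : s.Nonempty)
    {M N : Fin m → Fin m → ℝ} {α c κ : ℝ} (hα : α ≠ 0)
    (hMN : ∀ a ∈ s, ∀ b ∈ s, α * M a b = c * kdelta a b + κ * N a b)
    {a b : Fin m} (ha : a ∈ s) (hb : b ∈ s) :
    tracelessOn s M a b = κ / α * tracelessOn s N a b := by
  have htrace : α * ∑ d ∈ s, M d d = c * #s + κ * ∑ d ∈ s, N d d := by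
    rw [mul_sum, sum_congr rfl fun d hd => hMN d hd d hd, sum_add_distrib, ← mul_sum, ← mul_sum]
    simp only [kdelta_self, sum_const, nsmul_eq_mul]
    ring
  have hcard : (#s : ℝ) ≠ 0 := by exact_mod_cast hs.card_pos.ne'
  unfold tracelessOn
  field_simp
  linear_combination (#s : ℝ) * hMN a ha b hb - kdelta a b * htrace

section AdaptedFrame

variable {m : ℕ} (R : Fin m → Fin m → ℝ) (e : Fin m) (w : ℝ)

theorem Dt_single_of_ne_of_ne_of_ne {a b c : Fin m} (hb : b ≠ e) (hc : c ≠ e) :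
    Dt m R (Pi.single e w) a b c
      = w / (((m : ℝ) - 1) * ((m : ℝ) - 2)) * (kdelta a b * R e c - kdelta a c * R e b) := by
  simp only [Dt, sum_single_mul, Pi.single_eq_of_ne hb, Pi.single_eq_of_ne hc, div_eq_mul_inv,
    mul_inv]
  ring

theorem Dt_single_self_of_ne_of_ne {b c : Fin m} (hb : b ≠ e) (hc : c ≠ e) :
    Dt m R (Pi.single e w) e b c = 0 := by
  simp only [Dt, sum_single_mul, Pi.single_eq_of_ne hb, Pi.single_eq_of_ne hc,
    kdelta_of_ne hb.symm, kdelta_of_ne hc.symm]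
  ring

theorem Dt_single_self_of_ne_self (hm : 3 ≤ m) {b : Fin m} (hb : b ≠ e) :
    Dt m R (Pi.single e w) e b e = w / ((m : ℝ) - 1) * R e b := by
  have hm3 : (3 : ℝ) ≤ m := by exact_mod_cast hm
  have hm1 : (m : ℝ) - 1 ≠ 0 := by linarith
  have hm2 : (m : ℝ) - 2 ≠ 0 := by linarith
  simp only [Dt, sum_single_mul, Pi.single_eq_same, Pi.single_eq_of_ne hb, kdelta_self,
    kdelta_of_ne hb.symm]
  field_simp
  ring

theorem Dt_single_of_ne_of_ne_self {a b : Fin m} (ha : a ≠ e) (hb : b ≠ e) :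
    Dt m R (Pi.single e w) a b e
      = w / ((m : ℝ) - 2) * tracelessOn (univ.erase e) R a b := by
  simp only [Dt, tracelessOn, cast_card_univ_erase, sum_single_mul, Pi.single_eq_same,
    Pi.single_eq_of_ne hb, kdelta_of_ne ha, div_eq_mul_inv, mul_inv,
    ← add_sum_erase univ (fun t => R t t) (mem_univ e)]
  ring

theorem sum_sq_Dt_single_self (hm : 3 ≤ m) :
    ∑ j, ∑ k, Dt m R (Pi.single e w) e j k ^ 2
      = 2 * (w / ((m : ℝ) - 1)) ^ 2 * ∑ b ∈ univ.erase e, R e b ^ 2 := by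
  rw [Fintype.sum_sum_sq_of_antisymm _ (Dt_antisymm R _ e) e]
  have hnormal : ∀ b ∈ univ.erase e,
      Dt m R (Pi.single e w) e b e ^ 2 = (w / ((m : ℝ) - 1)) ^ 2 * R e b ^ 2 := fun b hb => by
    rw [Dt_single_self_of_ne_self R e w hm (ne_of_mem_erase hb), mul_pow]
  have htangent : ∀ b ∈ univ.erase e,
      ∑ c ∈ univ.erase e, Dt m R (Pi.single e w) e b c ^ 2 = 0 :=
    fun b hb => sum_eq_zero fun c hc => by
      rw [Dt_single_self_of_ne_of_ne R e w (ne_of_mem_erase hb) (ne_of_mem_erase hc), sq,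
        mul_zero]
  rw [sum_congr rfl hnormal, sum_congr rfl htangent, sum_const_zero, ← mul_sum]
  ring

theorem sum_sq_Dt_single_of_ne {a : Fin m} (ha : a ≠ e) :
    ∑ j, ∑ k, Dt m R (Pi.single e w) a j k ^ 2
      = 2 * ∑ b ∈ univ.erase e, Dt m R (Pi.single e w) a b e ^ 2
        + 2 * (w / (((m : ℝ) - 1) * ((m : ℝ) - 2))) ^ 2
          * (∑ b ∈ univ.erase e, R e b ^ 2 - R e a ^ 2) := by
  rw [Fintype.sum_sum_sq_of_antisymm _ (Dt_antisymm R _ a) e]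
  congr 1
  calc ∑ b ∈ univ.erase e, ∑ c ∈ univ.erase e, Dt m R (Pi.single e w) a b c ^ 2
      = (w / (((m : ℝ) - 1) * ((m : ℝ) - 2))) ^ 2
          * ∑ b ∈ univ.erase e, ∑ c ∈ univ.erase e,
              (kdelta a b * R e c - kdelta a c * R e b) ^ 2 := by
        simp only [mul_sum]
        refine sum_congr rfl fun b hb => sum_congr rfl fun c hc => ?_
        rw [Dt_single_of_ne_of_ne_of_ne R e w (ne_of_mem_erase hb) (ne_of_mem_erase hc), mul_pow]
    _ = _ := by
        rw [Finset.sum_sum_mul_sub_mul_sq]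
        simp only [sq (kdelta _ _), sum_kdelta_mul (mem_erase.mpr ⟨ha, mem_univ a⟩),
          kdelta_self, one_mul]
        ring

theorem sum_sq_Dt_single (hm : 3 ≤ m) :
    ∑ i, ∑ j, ∑ k, Dt m R (Pi.single e w) i j k ^ 2
      = 2 * ∑ a ∈ univ.erase e, ∑ b ∈ univ.erase e, Dt m R (Pi.single e w) a b e ^ 2
        + 2 * w ^ 2 / (((m : ℝ) - 1) * ((m : ℝ) - 2)) * ∑ b ∈ univ.erase e, R e b ^ 2 := by
  have hm3 : (3 : ℝ) ≤ m := by exact_mod_cast hm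
  have hm1 : (m : ℝ) - 1 ≠ 0 := by linarith
  have hm2 : (m : ℝ) - 2 ≠ 0 := by linarith
  rw [← add_sum_erase univ _ (mem_univ e), sum_sq_Dt_single_self R e w hm,
    sum_congr rfl fun a ha => sum_sq_Dt_single_of_ne R e w (ne_of_mem_erase ha),
    sum_add_distrib, ← mul_sum, ← mul_sum, sum_sub_distrib, sum_const, nsmul_eq_mul,
    cast_card_univ_erase]
  field_simp
  ring

end AdaptedFrame

theorem D_norm_sq_second_fundamental_form_general (m : ℕ) (hm : 3 ≤ m)
    (R H : Fin m → Fin m → ℝ)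
    (hR : ∀ i j, R i j = R j i)
    (f : Fin m → ℝ) (e : Fin m) (w : ℝ) (hw : w ≠ 0)
    (hfa : ∀ a, a ≠ e → f a = 0) (hfe : f e = w)
    (α β μ ρ lam : ℝ) (hα : α ≠ 0)
    (heq : ∀ i j, α * R i j + β * H i j + μ * f i * f j
      = (ρ * (∑ t, R t t) + lam) * kdelta i j)
    (h : Fin m → Fin m → ℝ) (hdef : ∀ a b, h a b = - H a b / w)
    (hmean : ℝ)
    (hmeandef : hmean = (1 / ((m : ℝ) - 1)) * ∑ a ∈ Finset.univ.erase e, h a a) :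
    ∑ i, ∑ j, ∑ k, (Dt m R f i j k) ^ 2
      = (β / α) ^ 2 * (2 * w ^ 4 / ((m : ℝ) - 2) ^ 2) *
          ∑ a ∈ Finset.univ.erase e, ∑ b ∈ Finset.univ.erase e,
            (h a b - hmean * kdelta a b) ^ 2
        + (2 * w ^ 2 / (((m : ℝ) - 1) * ((m : ℝ) - 2))) *
            ∑ a ∈ Finset.univ.erase e, (R a e) ^ 2 := by
  have hm3 : (3 : ℝ) ≤ m := by exact_mod_cast hm
  have hm1 : (m : ℝ) - 1 ≠ 0 := by linarith
  have hm2 : (m : ℝ) - 2 ≠ 0 := by linarith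
  have hE : (univ.erase e).Nonempty := by
    rw [← card_pos, card_erase_of_mem (mem_univ e), card_univ, Fintype.card_fin]
    omega
  have hRh : ∀ a ∈ univ.erase e, ∀ b ∈ univ.erase e,
      α * R a b = (ρ * ∑ t, R t t + lam) * kdelta a b + β * w * h a b := fun a ha b _ => by
    have hH : H a b = -(w * h a b) := by
      rw [hdef]
      field_simp
    linear_combination heq a b - β * hH - μ * f b * hfa a (ne_of_mem_erase ha)
  obtain rfl : f = Pi.single e w := funext fun t => by
    by_cases ht : t = e
    · simp [ht, hfe]
    · simp [ht, hfa t ht]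
  have hDt : ∀ a ∈ univ.erase e, ∀ b ∈ univ.erase e, Dt m R (Pi.single e w) a b e
      = β * w ^ 2 / (α * ((m : ℝ) - 2)) * (h a b - hmean * kdelta a b) := fun a ha b hb => by
    rw [Dt_single_of_ne_of_ne_self R e w (ne_of_mem_erase ha) (ne_of_mem_erase hb),
      tracelessOn_eq_of_mul_eq hE hα hRh ha hb, tracelessOn, cast_card_univ_erase, hmeandef]
    field_simp
  have hnormal : ∑ a ∈ univ.erase e, ∑ b ∈ univ.erase e, Dt m R (Pi.single e w) a b e ^ 2
      = (β * w ^ 2 / (α * ((m : ℝ) - 2))) ^ 2 * ∑ a ∈ univ.erase e, ∑ b ∈ univ.erase e,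
          (h a b - hmean * kdelta a b) ^ 2 := by
    simp only [mul_sum]
    exact sum_congr rfl fun a ha => sum_congr rfl fun b hb => by rw [hDt a ha b hb, mul_pow]
  have hmixed : ∑ a ∈ univ.erase e, R e a ^ 2 = ∑ a ∈ univ.erase e, R a e ^ 2 :=
    sum_congr rfl fun a _ => by rw [hR e a]
  rw [sum_sq_Dt_single R e w hm, hnormal, hmixed]
  field_simp

/-- squared norm of `D` in terms of the traceless second fundamental
form of the level set and the mixed Ricci components, in an adapted frame. Here `e`
is the distinguished last index (the direction of `∇f/|∇f|`) and the lowercase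
indices range over `Finset.univ.erase e` (i.e. `{1,…,m−1}`). -/
theorem D_norm_sq_second_fundamental_form (m : ℕ) (hm : 3 ≤ m)
    (R H : Fin m → Fin m → ℝ)
    (hR : ∀ i j, R i j = R j i) (hHsymm : ∀ i j, H i j = H j i)
    (f : Fin m → ℝ) (e : Fin m) (w : ℝ) (hw : w ≠ 0)
    (hfa : ∀ a, a ≠ e → f a = 0) (hfe : f e = w)
    (α β μ ρ lam : ℝ) (hα : α ≠ 0) (hβ : β ≠ 0)
    (heq : ∀ i j, α * R i j + β * H i j + μ * f i * f j
      = (ρ * (∑ t, R t t) + lam) * kdelta i j)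
    (h : Fin m → Fin m → ℝ) (hdef : ∀ a b, h a b = - H a b / w)
    (hmean : ℝ)
    (hmeandef : hmean = (1 / ((m : ℝ) - 1)) * ∑ a ∈ Finset.univ.erase e, h a a) :
    ∑ i, ∑ j, ∑ k, (Dt m R f i j k) ^ 2
      = (β / α) ^ 2 * (2 * w ^ 4 / ((m : ℝ) - 2) ^ 2) *
          ∑ a ∈ Finset.univ.erase e, ∑ b ∈ Finset.univ.erase e,
            (h a b - hmean * kdelta a b) ^ 2
        + (2 * w ^ 2 / (((m : ℝ) - 1) * ((m : ℝ) - 2))) *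
            ∑ a ∈ Finset.univ.erase e, (R a e) ^ 2 :=
  D_norm_sq_second_fundamental_form_general m hm R H hR f e w hw hfa hfe α β μ ρ lam hα heq h hdef
    hmean hmeandef
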